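/- Let g be a standard Gaussian vector in R^d, let S ⊂ R^d be a nonempty compact set, and define ℓ(S) = E sup_{w∈S} ⟨g,w⟩ and W = sup_{w∈S} ‖w‖₂. Then inf_{t≥0} E[dist(g, tS)²] ≤ d − ℓ(S)²/W², provided W > 0. -/

import Mathlib

open MeasureTheory ProbabilityTheory Real Finset Pointwise
noncomputable section
/-- Euclidean inner product. -/
def ip {ι : Type*} [Fintype ι] (u v : ι → ℝ) : ℝ := ∑ i, u i * v i
/-- ℓ1 norm. -/
def l1 {ι : Type*} [Fintype ι] (v : ι → ℝ) : ℝ := ∑ i, |v i|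
/-- Euclidean (ℓ2) norm. -/
def l2 {ι : Type*} [Fintype ι] (v : ι → ℝ) : ℝ := Real.sqrt (∑ i, v i ^ 2)
/-- Standard Gaussian measure on ι → ℝ. -/
def stdGaussian (ι : Type*) [Fintype ι] : Measure (ι → ℝ) :=
  Measure.pi fun _ => gaussianReal 0 1
/-- Matrix-vector product, matrix given by its rows. -/
def amul {ι κ : Type*} [Fintype ι] [Fintype κ] (Ω : ι → κ → ℝ) (z : κ → ℝ) : ι → ℝ :=
  fun i => ip (Ω i) z
/-- Transposed matrix-vector product. -/
def atmul {ι κ : Type*} [Fintype ι] [Fintype κ] (Ω : ι → κ → ℝ) (α : ι → ℝ) : κ → ℝ :=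
  fun j => ∑ i, α i * Ω i j
/-- Gaussian width of a set. -/
def gaussWidth {ι : Type*} [Fintype ι] (S : Set (ι → ℝ)) : ℝ :=
  ∫ g, sSup ((fun w => ip g w) '' S) ∂stdGaussian ι
/-- Euclidean distance from a point to a set. -/
def distTo {ι : Type*} [Fintype ι] (g : ι → ℝ) (S : Set (ι → ℝ)) : ℝ :=
  sInf ((fun u => l2 (g - u)) '' S)
/-- max of ‖Ωz‖₁ over the Euclidean unit ball. -/
def maxL1 {ι κ : Type*} [Fintype ι] [Fintype κ] (Ω : ι → κ → ℝ) : ℝ :=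
  sSup ((fun z => l1 (amul Ω z)) '' {z | l2 z ≤ 1})
/-- Subdifferential of f at x. -/
def subdiffAt {ι : Type*} [Fintype ι] (f : (ι → ℝ) → ℝ) (x : ι → ℝ) : Set (ι → ℝ) :=
  {v | ∀ z, f x + ip (z - x) v ≤ f z}
/-- Tangent (descent) cone of ‖Ω·‖₁ at x. -/
def tangentCone {ι κ : Type*} [Fintype ι] [Fintype κ] (Ω : ι → κ → ℝ) (x : κ → ℝ) :
    Set (κ → ℝ) :=
  {v | ∃ (t : ℝ) (z : κ → ℝ), 0 ≤ t ∧ l1 (amul Ω z) ≤ l1 (amul Ω x) ∧ v = t • (z - x)}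
open scoped NNReal ENNReal

namespace InfDistAux

/-! ### One-dimensional Gaussian moment computations -/

lemma gauss_int (g : ℝ → ℝ) :
    ∫ x, g x ∂gaussianReal 0 1 = ∫ x, gaussianPDFReal 0 1 x * g x := by
  rw [gaussianReal_of_var_ne_zero 0 one_ne_zero, gaussianPDF_def]
  rw [show (fun x => ENNReal.ofReal (gaussianPDFReal 0 1 x))
      = fun x => ((Real.toNNReal (gaussianPDFReal 0 1 x) : ℝ≥0) : ℝ≥0∞) from rfl]
  rw [integral_withDensity_eq_integral_smul ((measurable_gaussianPDFReal 0 1).real_toNNReal) g]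
  congr 1; ext x
  rw [NNReal.smul_def, Real.coe_toNNReal _ (gaussianPDFReal_nonneg 0 1 x), smul_eq_mul]

lemma gauss_integrable (g : ℝ → ℝ) :
    Integrable g (gaussianReal 0 1) ↔
      Integrable (fun x => gaussianPDFReal 0 1 x * g x) MeasureTheory.volume := by
  rw [gaussianReal_of_var_ne_zero 0 one_ne_zero, gaussianPDF_def]
  rw [show (fun x => ENNReal.ofReal (gaussianPDFReal 0 1 x))
      = fun x => ((Real.toNNReal (gaussianPDFReal 0 1 x) : ℝ≥0) : ℝ≥0∞) from rfl]
  rw [integrable_withDensity_iff_integrable_smul ((measurable_gaussianPDFReal 0 1).real_toNNReal)]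
  constructor <;> intro h <;> refine h.congr (Filter.Eventually.of_forall fun x => ?_) <;>
    simp only [NNReal.smul_def, Real.coe_toNNReal _ (gaussianPDFReal_nonneg 0 1 x), smul_eq_mul]

lemma pdf0_eq (x : ℝ) : gaussianPDFReal 0 1 x = (√(2*π))⁻¹ * rexp (-x^2/2) := by
  simp [gaussianPDFReal]

lemma pdf0_even (x : ℝ) : gaussianPDFReal 0 1 (-x) = gaussianPDFReal 0 1 x := by
  simp [pdf0_eq]

lemma int_pdf_mul_id : Integrable (fun x => gaussianPDFReal 0 1 x * x) MeasureTheory.volume := by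
  have h : Integrable (fun x => x * rexp (-(2⁻¹ : ℝ) * x^2)) MeasureTheory.volume :=
    integrable_mul_exp_neg_mul_sq (by norm_num)
  refine (h.const_mul ((√(2*π))⁻¹)).congr (Filter.Eventually.of_forall fun x => ?_)
  simp only [pdf0_eq]; ring_nf

lemma val_pdf_mul_id : ∫ x, gaussianPDFReal 0 1 x * x = 0 := by
  have h := integral_neg_eq_self (fun x => gaussianPDFReal 0 1 x * x)
    (MeasureTheory.volume : Measure ℝ)
  have h2 : ∫ x, gaussianPDFReal 0 1 (-x) * (-x) = - ∫ x, gaussianPDFReal 0 1 x * x := by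
    simp_rw [pdf0_even, mul_neg]
    exact integral_neg _
  rw [h] at h2; linarith

lemma int_pdf_mul_sq : Integrable (fun x => gaussianPDFReal 0 1 x * x^2)
    MeasureTheory.volume := by
  have h : Integrable (fun x => x ^ (2:ℝ) * rexp (-(2⁻¹ : ℝ) * x^2)) MeasureTheory.volume :=
    integrable_rpow_mul_exp_neg_mul_sq (by norm_num) (by norm_num)
  simp_rw [show ∀ x:ℝ, x^(2:ℝ) = x^(2:ℕ) from fun x => by
    rw [← Real.rpow_natCast x 2]; norm_num] at h
  refine (h.const_mul ((√(2*π))⁻¹)).congr (Filter.Eventually.of_forall fun x => ?_)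
  simp only [pdf0_eq]; ring_nf

lemma ioi_sq_exp : ∫ x in Set.Ioi (0:ℝ), x^2 * rexp (-(2⁻¹:ℝ) * x^2) = √2 * √π / 2 := by
  have h : ∫ x in Set.Ioi (0:ℝ), x ^ (2:ℝ) * rexp (-(2⁻¹:ℝ) * x ^ (2:ℝ))
      = (2⁻¹:ℝ) ^ (-((2:ℝ)+1)/2) * (1/2) * Real.Gamma (((2:ℝ)+1)/2) :=
    integral_rpow_mul_exp_neg_mul_rpow (by norm_num) (by norm_num) (by norm_num)
  have e1 : ∀ x:ℝ, x^(2:ℝ) = x^(2:ℕ) := fun x => by rw [← Real.rpow_natCast x 2]; norm_num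
  simp_rw [e1] at h
  rw [h]
  have hg : Real.Gamma (((2:ℝ)+1)/2) = √π / 2 := by
    rw [show ((2:ℝ)+1)/2 = 1/2 + 1 by norm_num, Real.Gamma_add_one (by norm_num),
      Real.Gamma_one_half_eq]
    ring
  have hb : (2⁻¹:ℝ) ^ (-((2:ℝ)+1)/2) = 2 * √2 := by
    rw [show (-((2:ℝ)+1)/2) = -(3/2 : ℝ) by norm_num, Real.rpow_neg (by norm_num),
      Real.inv_rpow (by norm_num), inv_inv,
      show (3/2:ℝ) = 1 + 1/2 by norm_num, Real.rpow_add (by norm_num), Real.rpow_one,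
      ← Real.sqrt_eq_rpow]
  rw [hg, hb]; ring

lemma val_pdf_mul_sq : ∫ x, gaussianPDFReal 0 1 x * x^2 = 1 := by
  simp_rw [pdf0_eq, show ∀ x:ℝ, (√(2*π))⁻¹ * rexp (-x^2/2) * x^2
    = (√(2*π))⁻¹ * (x^2 * rexp (-(2⁻¹:ℝ)*x^2)) from fun x => by ring_nf]
  rw [MeasureTheory.integral_const_mul]
  have h2 : ∫ x, x^2 * rexp (-(2⁻¹:ℝ)*x^2)
      = 2 * ∫ x in Set.Ioi (0:ℝ), x^2 * rexp (-(2⁻¹:ℝ)*x^2) := by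
    rw [← integral_comp_abs (f := fun y => y^2 * rexp (-(2⁻¹:ℝ)*y^2))]
    congr 1; funext x; simp [sq_abs]
  rw [h2, ioi_sq_exp, Real.sqrt_mul (by norm_num : (0:ℝ) ≤ 2)]
  have : √2 * √π > 0 := by positivity
  field_simp

lemma integral_id_gauss01 : ∫ x, x ∂gaussianReal 0 1 = 0 := by
  rw [gauss_int]; exact val_pdf_mul_id

lemma integral_sq_gauss01 : ∫ x, x^2 ∂gaussianReal 0 1 = 1 := by
  rw [gauss_int]; exact val_pdf_mul_sq

lemma integrable_id_gauss01 : Integrable (fun x => x) (gaussianReal 0 1) := by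
  rw [gauss_integrable (fun x => x)]; exact int_pdf_mul_id

lemma integrable_sq_gauss01 : Integrable (fun x => x^2) (gaussianReal 0 1) := by
  rw [gauss_integrable (fun x => x^2)]; exact int_pdf_mul_sq

/-! ### The standard Gaussian on a finite product -/

instance {ι : Type*} [Fintype ι] : IsProbabilityMeasure (stdGaussian ι) := by
  unfold _root_.stdGaussian; infer_instance

lemma measurePreserving_eval_std {ι : Type*} [Fintype ι] (i : ι) :
    MeasurePreserving (Function.eval i) (stdGaussian ι) (gaussianReal 0 1) := by
  classical
  refine ⟨measurable_pi_apply i, ?_⟩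
  refine Measure.ext fun s hs => ?_
  rw [Measure.map_apply (measurable_pi_apply i) hs, Set.eval_preimage, _root_.stdGaussian,
    Measure.pi_pi]
  rw [Finset.prod_eq_single i (fun j _ hj => by simp [Function.update_of_ne hj]) (by simp)]
  simp

lemma integrable_eval_comp {ι : Type*} [Fintype ι] (i : ι) {φ : ℝ → ℝ}
    (hφ : AEStronglyMeasurable φ (gaussianReal 0 1)) (h : Integrable φ (gaussianReal 0 1)) :
    Integrable (fun g : ι → ℝ => φ (g i)) (stdGaussian ι) :=
  ((measurePreserving_eval_std i).integrable_comp hφ).mpr h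

lemma integral_eval_comp {ι : Type*} [Fintype ι] (i : ι) {φ : ℝ → ℝ}
    (hφ : AEStronglyMeasurable φ (gaussianReal 0 1)) :
    ∫ g, φ (g i) ∂stdGaussian ι = ∫ x, φ x ∂gaussianReal 0 1 := by
  rw [← (measurePreserving_eval_std i).map_eq]
  exact (integral_map (measurable_pi_apply i).aemeasurable
    (by rw [(measurePreserving_eval_std i).map_eq]; exact hφ)).symm

lemma integrable_eval {ι : Type*} [Fintype ι] (i : ι) :
    Integrable (fun g : ι → ℝ => g i) (stdGaussian ι) :=
  integrable_eval_comp i (φ := fun x => x) measurable_id.aestronglyMeasurable integrable_id_gauss01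

lemma integral_eval {ι : Type*} [Fintype ι] (i : ι) :
    ∫ g, g i ∂stdGaussian ι = 0 := by
  rw [integral_eval_comp i (φ := fun x => x) measurable_id.aestronglyMeasurable]; exact integral_id_gauss01

lemma integrable_eval_sq {ι : Type*} [Fintype ι] (i : ι) :
    Integrable (fun g : ι → ℝ => (g i)^2) (stdGaussian ι) :=
  integrable_eval_comp i (by fun_prop) integrable_sq_gauss01

lemma integral_eval_sq {ι : Type*} [Fintype ι] (i : ι) :
    ∫ g, (g i)^2 ∂stdGaussian ι = 1 := by
  rw [integral_eval_comp i (φ := fun x => x^2) (by fun_prop)]; exact integral_sq_gauss01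

lemma integrable_sumsq {ι : Type*} [Fintype ι] :
    Integrable (fun g : ι → ℝ => ∑ i, (g i)^2) (stdGaussian ι) :=
  MeasureTheory.integrable_finset_sum _ fun i _ => integrable_eval_sq i

lemma integral_sumsq {ι : Type*} [Fintype ι] :
    ∫ g, (∑ i, (g i)^2) ∂stdGaussian ι = Fintype.card ι := by
  rw [MeasureTheory.integral_finset_sum _ fun i _ => integrable_eval_sq i]
  simp [integral_eval_sq]

/-! ### Elementary facts about `ip` and `l2` -/

lemma l2_nonneg {ι : Type*} [Fintype ι] (v : ι → ℝ) : 0 ≤ l2 v := Real.sqrt_nonneg _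

lemma abs_ip_le {ι : Type*} [Fintype ι] (u v : ι → ℝ) : |ip u v| ≤ l2 u * l2 v := by
  have h := Finset.sum_mul_sq_le_sq_mul_sq Finset.univ u v
  rw [show |ip u v| = Real.sqrt ((ip u v)^2) from (Real.sqrt_sq_eq_abs _).symm, l2, l2,
    ← Real.sqrt_mul (by positivity)]
  exact Real.sqrt_le_sqrt h

lemma continuous_ip_right {ι : Type*} [Fintype ι] (g : ι → ℝ) :
    Continuous (fun w : ι → ℝ => ip g w) := by
  unfold ip; exact continuous_finset_sum _ fun i _ => (continuous_const.mul (continuous_apply i))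

lemma continuous_l2 {ι : Type*} [Fintype ι] : Continuous (l2 : (ι → ℝ) → ℝ) := by
  unfold l2
  exact Real.continuous_sqrt.comp (continuous_finset_sum _ fun i _ => (continuous_apply i).pow 2)

end InfDistAux

namespace InfDistAux

section Main

variable {ι : Type*} [Fintype ι]

/-- The sup of `⟨g, ·⟩` over `S`. -/
def fS (S : Set (ι → ℝ)) (g : ι → ℝ) : ℝ := sSup ((fun w => ip g w) '' S)

lemma gaussWidth_eq_integral_fS (S : Set (ι → ℝ)) :
    gaussWidth S = ∫ g, fS S g ∂stdGaussian ι := rfl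

lemma bddAbove_ip (S : Set (ι → ℝ)) (hc : IsCompact S) (g : ι → ℝ) :
    BddAbove ((fun w => ip g w) '' S) :=
  (hc.image (continuous_ip_right g)).bddAbove

lemma exists_max (S : Set (ι → ℝ)) (hS : S.Nonempty) (hc : IsCompact S) (g : ι → ℝ) :
    ∃ w ∈ S, ip g w = fS S g ∧ ∀ w' ∈ S, ip g w' ≤ ip g w := by
  obtain ⟨w, hwS, hw⟩ := hc.exists_isMaxOn hS (continuous_ip_right g).continuousOn
  have hmax : ∀ w' ∈ S, ip g w' ≤ ip g w := fun w' hw' => hw hw'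
  refine ⟨w, hwS, le_antisymm ?_ ?_, hmax⟩
  · exact le_csSup (bddAbove_ip S hc g) (Set.mem_image_of_mem _ hwS)
  · exact csSup_le (hS.image _) (by rintro _ ⟨w', hw', rfl⟩; exact hmax w' hw')

lemma ip_sub_left (g g' w : ι → ℝ) : ip g w - ip g' w = ip (g - g') w := by
  unfold ip
  rw [← Finset.sum_sub_distrib]
  exact Finset.sum_congr rfl fun i _ => by simp [Pi.sub_apply]; ring

variable {S : Set (ι → ℝ)} {W : ℝ}

lemma fS_le_add (hS : S.Nonempty) (hc : IsCompact S) (hWb : ∀ w ∈ S, l2 w ≤ W)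
    (g g' : ι → ℝ) : fS S g ≤ fS S g' + W * l2 (g - g') := by
  obtain ⟨w, hwS, hweq, -⟩ := exists_max S hS hc g
  have h1 : ip g' w ≤ fS S g' := le_csSup (bddAbove_ip S hc g') (Set.mem_image_of_mem _ hwS)
  have h2 : ip (g - g') w ≤ W * l2 (g - g') := by
    calc ip (g - g') w ≤ |ip (g - g') w| := le_abs_self _
    _ ≤ l2 (g - g') * l2 w := abs_ip_le _ _
    _ ≤ l2 (g - g') * W := by
        have := l2_nonneg (g - g')
        nlinarith [hWb w hwS]
    _ = W * l2 (g - g') := mul_comm _ _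
  have := ip_sub_left g g' w
  linarith

lemma abs_fS_sub_le (hS : S.Nonempty) (hc : IsCompact S) (hWb : ∀ w ∈ S, l2 w ≤ W)
    (g g' : ι → ℝ) : |fS S g - fS S g'| ≤ W * l2 (g - g') := by
  rw [abs_sub_le_iff]
  constructor
  · have := fS_le_add hS hc hWb g g'; linarith
  · have := fS_le_add hS hc hWb g' g
    have he : l2 (g' - g) = l2 (g - g') := by
      unfold l2; congr 1; exact Finset.sum_congr rfl fun i _ => by simp [Pi.sub_apply]; ring
    rw [he] at this; linarith

lemma continuous_fS (hS : S.Nonempty) (hc : IsCompact S) (hWb : ∀ w ∈ S, l2 w ≤ W) :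
    Continuous (fS S) := by
  rw [continuous_iff_continuousAt]
  intro g'
  rw [ContinuousAt, tendsto_iff_dist_tendsto_zero]
  have hb : Filter.Tendsto (fun g => W * l2 (g - g')) (nhds g') (nhds 0) := by
    have hcont : Continuous (fun g : ι → ℝ => W * l2 (g - g')) :=
      continuous_const.mul (continuous_l2.comp (continuous_id.sub continuous_const))
    have := hcont.tendsto g'
    simpa [l2] using this
  refine squeeze_zero (fun g => dist_nonneg) (fun g => ?_) hb
  rw [Real.dist_eq]
  exact abs_fS_sub_le hS hc hWb g g'

lemma abs_fS_le (hS : S.Nonempty) (hc : IsCompact S) (hWb : ∀ w ∈ S, l2 w ≤ W)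
    (g : ι → ℝ) : |fS S g| ≤ W * l2 g := by
  obtain ⟨w, hwS, hweq, -⟩ := exists_max S hS hc g
  calc |fS S g| = |ip g w| := by rw [hweq]
  _ ≤ l2 g * l2 w := abs_ip_le _ _
  _ ≤ l2 g * W := by nlinarith [l2_nonneg g, hWb w hwS, abs_nonneg (ip g w), abs_ip_le g w]
  _ = W * l2 g := mul_comm _ _

lemma l2_le_one_add (g : ι → ℝ) : l2 g ≤ 1 + ∑ i, (g i)^2 := by
  unfold l2
  have h0 : (0:ℝ) ≤ ∑ i, (g i)^2 := by positivity
  calc Real.sqrt (∑ i, (g i)^2) ≤ Real.sqrt ((1 + ∑ i, (g i)^2)^2) :=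
        Real.sqrt_le_sqrt (by nlinarith)
  _ = 1 + ∑ i, (g i)^2 := Real.sqrt_sq (by positivity)

lemma integrable_fS (hS : S.Nonempty) (hc : IsCompact S) (hW0 : 0 ≤ W)
    (hWb : ∀ w ∈ S, l2 w ≤ W) : Integrable (fS S) (stdGaussian ι) := by
  have hdom : Integrable (fun g : ι → ℝ => W * (1 + ∑ i, (g i)^2)) (stdGaussian ι) :=
    ((integrable_const 1).add integrable_sumsq).const_mul W
  refine hdom.mono ((continuous_fS hS hc hWb).aestronglyMeasurable)
    (Filter.Eventually.of_forall fun g => ?_)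
  have h1 : |fS S g| ≤ W * l2 g := abs_fS_le hS hc hWb g
  have h2 : l2 g ≤ 1 + ∑ i, (g i)^2 := l2_le_one_add g
  have h3 : W * l2 g ≤ W * (1 + ∑ i, (g i)^2) := by nlinarith
  rw [Real.norm_eq_abs, Real.norm_eq_abs]
  exact le_trans (le_trans h1 h3) (le_abs_self _)

lemma integrable_ip_right (w : ι → ℝ) :
    Integrable (fun g : ι → ℝ => ip g w) (stdGaussian ι) := by
  unfold ip
  exact MeasureTheory.integrable_finset_sum _ fun i _ => (integrable_eval i).mul_const _

lemma integral_ip_right (w : ι → ℝ) : ∫ g, ip g w ∂stdGaussian ι = 0 := by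
  unfold ip
  rw [MeasureTheory.integral_finset_sum _ fun i _ => (integrable_eval i).mul_const _]
  refine Finset.sum_eq_zero fun i _ => ?_
  rw [MeasureTheory.integral_mul_const, integral_eval]
  ring

lemma gaussWidth_nonneg (hS : S.Nonempty) (hc : IsCompact S) (hW0 : 0 ≤ W)
    (hWb : ∀ w ∈ S, l2 w ≤ W) : 0 ≤ gaussWidth S := by
  obtain ⟨w₁, hw₁⟩ := id hS
  rw [gaussWidth_eq_integral_fS]
  have h := MeasureTheory.integral_mono (integrable_ip_right w₁)
    (integrable_fS hS hc hW0 hWb)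
    (fun g => le_csSup (bddAbove_ip S hc g) (Set.mem_image_of_mem _ hw₁))
  rw [integral_ip_right] at h
  exact h

end Main

end InfDistAux

open InfDistAux in
theorem inf_dist_scaled_set_bound (d : ℕ) (S : Set (Fin d → ℝ)) (hS : S.Nonempty)
    (hc : IsCompact S) (W : ℝ) (hW : W = sSup (l2 '' S)) (hW0 : 0 < W) :
    sInf {r | ∃ t : ℝ, 0 ≤ t ∧ r = ∫ g, distTo g (t • S) ^ 2 ∂stdGaussian (Fin d)}
      ≤ d - gaussWidth S ^ 2 / W ^ 2 := by
  classical
  have hWb : ∀ w ∈ S, l2 w ≤ W := by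
    intro w hw
    rw [hW]
    exact le_csSup ((hc.image continuous_l2).bddAbove) (Set.mem_image_of_mem _ hw)
  have hW0' : (0:ℝ) ≤ W := hW0.le
  have hℓ0 : 0 ≤ gaussWidth S := gaussWidth_nonneg hS hc hW0' hWb
  set t := gaussWidth S / W^2 with htdef
  have ht : 0 ≤ t := div_nonneg hℓ0 (by positivity)
  have hpt : ∀ g : Fin d → ℝ, distTo g (t • S)^2
      ≤ (∑ i, (g i)^2) - 2*t*(fS S g) + t^2*W^2 := by
    intro g
    obtain ⟨w, hwS, hweq, -⟩ := exists_max S hS hc g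
    have hbdd : BddBelow ((fun u => l2 (g - u)) '' (t • S)) :=
      ⟨0, by rintro _ ⟨u, hu, rfl⟩; exact Real.sqrt_nonneg _⟩
    have h1 : distTo g (t • S) ≤ l2 (g - t • w) :=
      csInf_le hbdd (Set.mem_image_of_mem _ (Set.smul_mem_smul_set hwS))
    have h0 : 0 ≤ distTo g (t • S) :=
      Real.sInf_nonneg (by rintro _ ⟨u, hu, rfl⟩; exact Real.sqrt_nonneg _)
    have h2 : distTo g (t • S)^2 ≤ l2 (g - t • w)^2 := pow_le_pow_left₀ h0 h1 2
    have h3 : l2 (g - t • w)^2 = ∑ i, (g i - t * w i)^2 := by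
      unfold l2
      rw [Real.sq_sqrt (by positivity)]
      exact Finset.sum_congr rfl fun i _ => by
        simp [Pi.sub_apply, Pi.smul_apply, smul_eq_mul]
    have h4 : ∑ i, (g i - t * w i)^2
        = (∑ i, (g i)^2) - 2*t*(ip g w) + t^2*(∑ i, (w i)^2) := by
      unfold ip
      rw [Finset.mul_sum, Finset.mul_sum, ← Finset.sum_sub_distrib, ← Finset.sum_add_distrib]
      exact Finset.sum_congr rfl fun i _ => by ring
    have h5 : ∑ i, (w i)^2 ≤ W^2 := by
      have hle := hWb w hwS
      have hl2 : l2 w ^ 2 = ∑ i, (w i)^2 := by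
        unfold l2; rw [Real.sq_sqrt (by positivity)]
      nlinarith [l2_nonneg w]
    have h6 : t^2*(∑ i, (w i)^2) ≤ t^2*W^2 := by nlinarith [sq_nonneg t]
    rw [h3, h4] at h2
    rw [← hweq]
    linarith
  have hfSint : Integrable (fS S) (stdGaussian (Fin d)) := integrable_fS hS hc hW0' hWb
  have hRHSint : Integrable (fun g : Fin d → ℝ =>
      (∑ i, (g i)^2) - 2*t*(fS S g) + t^2*W^2) (stdGaussian (Fin d)) :=
    (integrable_sumsq.sub (hfSint.const_mul _)).add (integrable_const _)
  have hmono := MeasureTheory.integral_mono_of_nonneg (μ := stdGaussian (Fin d))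
    (Filter.Eventually.of_forall fun g => sq_nonneg (distTo g (t • S)))
    hRHSint (Filter.Eventually.of_forall hpt)
  have hval : ∫ g, ((∑ i, (g i)^2) - 2*t*(fS S g) + t^2*W^2) ∂stdGaussian (Fin d)
      = d - 2*t*gaussWidth S + t^2*W^2 := by
    have e1 := MeasureTheory.integral_add (μ := stdGaussian (Fin d))
      (f := fun g : Fin d → ℝ => (∑ i, (g i)^2) - 2*t*(fS S g))
      (g := fun _ : Fin d → ℝ => t^2*W^2)
      (integrable_sumsq.sub (hfSint.const_mul _)) (integrable_const _)
    have e2 := MeasureTheory.integral_sub (μ := stdGaussian (Fin d))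
      (f := fun g : Fin d → ℝ => (∑ i, (g i)^2))
      (g := fun g : Fin d → ℝ => 2*t*(fS S g))
      integrable_sumsq (hfSint.const_mul _)
    rw [e1, e2]
    simp only [MeasureTheory.integral_const_mul, integral_sumsq, Fintype.card_fin,
      MeasureTheory.integral_const, measure_univ, probReal_univ, ENNReal.toReal_one, smul_eq_mul, one_mul,
      ← gaussWidth_eq_integral_fS]
  have hbddS : BddBelow {r | ∃ t' : ℝ, 0 ≤ t' ∧
      r = ∫ g, distTo g (t' • S) ^ 2 ∂stdGaussian (Fin d)} := by
    refine ⟨0, ?_⟩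
    rintro r ⟨t', ht', rfl⟩
    exact MeasureTheory.integral_nonneg fun g => sq_nonneg _
  refine le_trans (csInf_le hbddS ⟨t, ht, rfl⟩) (le_trans hmono ?_)
  rw [hval]
  have hW2 : (W:ℝ)^2 ≠ 0 := ne_of_gt (by positivity)
  have : (d:ℝ) - 2*t*gaussWidth S + t^2*W^2 = d - gaussWidth S^2 / W^2 := by
    rw [htdef]; field_simp; ring
  linarith [this.le]

end
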